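/- arXiv:math/0512249 — 2 statements merged into one kernel-verified Lean document; each statement's English description precedes it below -/
import Mathlib

section
/- For every n ≥ 1, substituting y = z in Q_n gives the complete factorization Q_n(x, z, z, t) = ∏_{k=1}^{n−1} (x + n·z + k·t). -/
open MvPolynomial

/-- The Chapoton polynomials `Q n`, defined by `Q 1 = 1` and
`Q (n+1) = [x + n z + (y + t)(n + y ∂_y)] Q n`, where the variables
`x, y, z, t` are `X 0, X 1, X 2, X 3` respectively. -/
noncomputable def ChapotonQ : ℕ → MvPolynomial (Fin 4) ℤ
  | 0 => 1
  | 1 => 1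
  | (n + 2) =>
      (X 0 + ((n : MvPolynomial (Fin 4) ℤ) + 1) * X 2) * ChapotonQ (n + 1) +
        (X 1 + X 3) * (((n : MvPolynomial (Fin 4) ℤ) + 1) * ChapotonQ (n + 1) +
          X 1 * pderiv 1 (ChapotonQ (n + 1)))

/-!
Write `Q (n+1) = R n (Q n)` with `R n = x + n z + (y + t)(n + y ∂_y)`, let `σ` be the substitution
`x ↦ x + z`, and put `S n = x + (n+1) z + n t + (y - z)(n + (y + t) ∂_y)`.
Since `σ` commutes with `∂_y`, `σ ∘ R n = (R n + z) ∘ σ`, and a direct computation gives the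
operator identity `R (n+1) ∘ S n = S (n+1) ∘ (R n + z)`. By induction `Q (n+1) = S n (σ (Q n))`.
At `y = z` the operator `S n` is multiplication by `x + (n+1) z + n t`, and `σ` turns the factors
`x + n z + k t` of `Q n (x, z, z, t)` into `x + (n+1) z + k t`.
-/

theorem MvPolynomial.pderiv_aeval_of_pderiv_eq {R σ : Type*} [CommSemiring R]
    (i : σ) (g : σ → MvPolynomial σ R) (hg : ∀ j, pderiv i (g j) = pderiv i (X j))
    (p : MvPolynomial σ R) : pderiv i (aeval g p) = aeval g (pderiv i p) := by
  classical
  induction p using MvPolynomial.induction_on with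
  | C a => simp
  | add p q hp hq => simp only [map_add, hp, hq]
  | mul_X p j hp =>
    simp only [map_mul, Derivation.leibniz, smul_eq_mul, map_add, aeval_X, hp, hg]
    simp [pderiv_X, Pi.single_apply]

namespace ChapotonQ

local notation "MP" => MvPolynomial (Fin 4) ℤ

noncomputable def recOp (n : ℕ) (p : MP) : MP :=
  (X 0 + (n : MP) * X 2) * p + (X 1 + X 3) * ((n : MP) * p + X 1 * pderiv 1 p)

noncomputable def splitOp (n : ℕ) (p : MP) : MP :=
  (X 0 + ((n : MP) + 1) * X 2 + (n : MP) * X 3) * p +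
    (X 1 - X 2) * ((n : MP) * p + (X 1 + X 3) * pderiv 1 p)

noncomputable def shiftX : MP →ₐ[ℤ] MP :=
  aeval ![X 0 + X 2, X 1, X 2, X 3]

theorem succ_eq_recOp {n : ℕ} (hn : 1 ≤ n) : ChapotonQ (n + 1) = recOp n (ChapotonQ n) := by
  obtain ⟨m, rfl⟩ := Nat.exists_eq_add_of_le' hn
  simp only [ChapotonQ, recOp]
  push_cast
  ring

theorem pderiv_shiftX (p : MP) : pderiv 1 (shiftX p) = shiftX (pderiv 1 p) :=
  pderiv_aeval_of_pderiv_eq 1 _ (fun j => by fin_cases j <;> simp [pderiv_X]) p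

theorem shiftX_recOp (n : ℕ) (p : MP) :
    shiftX (recOp n p) = recOp n (shiftX p) + X 2 * shiftX p := by
  simp only [recOp, map_add, map_mul, map_natCast, ← pderiv_shiftX]
  simp only [shiftX, aeval_X, Matrix.cons_val_zero, Matrix.cons_val]
  ring

theorem recOp_splitOp (n : ℕ) (p : MP) :
    recOp (n + 1) (splitOp n p) = splitOp (n + 1) (recOp n p + X 2 * p) := by
  simp only [recOp, splitOp, Nat.cast_add, Nat.cast_one, map_add, map_sub, Derivation.leibniz,
    smul_eq_mul, pderiv_X, Pi.single_eq_same, Pi.single_eq_of_ne, ne_eq, Fin.reduceEq,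
    not_false_eq_true, Derivation.map_natCast, Derivation.map_one_eq_zero]
  ring

theorem succ_eq_splitOp {n : ℕ} (hn : 1 ≤ n) :
    ChapotonQ (n + 1) = splitOp n (shiftX (ChapotonQ n)) := by
  induction n, hn using Nat.le_induction with
  | base =>
    simp only [ChapotonQ, splitOp, map_one, Derivation.map_one_eq_zero, Nat.cast_zero,
      Nat.cast_one]
    ring
  | succ n hn ih =>
    calc ChapotonQ (n + 1 + 1)
        = recOp (n + 1) (splitOp n (shiftX (ChapotonQ n))) := by
          rw [succ_eq_recOp (by omega), ih]
      _ = splitOp (n + 1) (shiftX (recOp n (ChapotonQ n))) := by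
          rw [recOp_splitOp, shiftX_recOp]
      _ = splitOp (n + 1) (shiftX (ChapotonQ (n + 1))) := by rw [succ_eq_recOp hn]

local notation "yEqZ" => aeval ![(X 0 : MP), X 2, X 2, X 3]

theorem aeval_splitOp (n : ℕ) (p : MP) :
    yEqZ (splitOp n p) = (X 0 + ((n : MP) + 1) * X 2 + (n : MP) * X 3) * yEqZ p := by
  simp [splitOp]

theorem aeval_shiftX (p : MP) : yEqZ (shiftX p) = shiftX (yEqZ p) := by
  have h : (yEqZ).comp shiftX = shiftX.comp yEqZ :=
    algHom_ext fun i => by fin_cases i <;> simp [shiftX]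
  exact AlgHom.congr_fun h p

theorem shiftX_linear_factor (m k : ℕ) :
    shiftX (X 0 + (m : MP) * X 2 + (k : MP) * X 3) =
      X 0 + ((m + 1 : ℕ) : MP) * X 2 + (k : MP) * X 3 := by
  simp only [shiftX, map_add, map_mul, map_natCast, aeval_X, Matrix.cons_val_zero,
    Matrix.cons_val, Nat.cast_add, Nat.cast_one]
  ring

theorem aeval_succ (n : ℕ) :
    yEqZ (ChapotonQ (n + 1)) =
      ∏ k ∈ Finset.Icc 1 n, (X 0 + ((n + 1 : ℕ) : MP) * X 2 + (k : MP) * X 3) := by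
  induction n with
  | zero => simp [ChapotonQ]
  | succ n ih =>
    rw [succ_eq_splitOp (by omega), aeval_splitOp, aeval_shiftX, ih, map_prod,
      Finset.prod_Icc_succ_top (by omega)]
    simp only [shiftX_linear_factor]
    push_cast
    ring

end ChapotonQ

theorem chapotonQ_y_eq_z_general (n : ℕ) :
    aeval ![X 0, X 2, X 2, X 3] (ChapotonQ n) =
      ∏ k ∈ Finset.Icc 1 (n - 1),
        (X 0 + (n : MvPolynomial (Fin 4) ℤ) * X 2 + (k : MvPolynomial (Fin 4) ℤ) * X 3) := by
  cases n with
  | zero => simp [ChapotonQ]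
  | succ n => simpa using ChapotonQ.aeval_succ n

/-- Substituting `y = z` gives `Q_n(x,z,z,t) = ∏_{k=1}^{n-1} (x + n z + k t)`. -/
theorem chapotonQ_y_eq_z (n : ℕ) (hn : 1 ≤ n) :
    aeval ![X 0, X 2, X 2, X 3] (ChapotonQ n) =
      ∏ k ∈ Finset.Icc 1 (n - 1),
        (X 0 + (n : MvPolynomial (Fin 4) ℤ) * X 2 + (k : MvPolynomial (Fin 4) ℤ) * X 3) :=
  chapotonQ_y_eq_z_general n
end

section
/- For every n ≥ 1, the polynomial obtained from Q_{n+1}(x, y, z, t) by substituting x − z − t for x equals (x + n·z)·Q_n + (y − z)·(n·Q_n + y·∂_y Q_n), where Q_n = Q_n(x, y, z, t). -/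
open MvPolynomial

/-- The substitution `x ↦ x - z - t` commutes with `∂_y`. -/
lemma pderiv_aeval_f4 (p : MvPolynomial (Fin 4) ℤ) :
    pderiv 1 (aeval (![X 0 - X 2 - X 3, X 1, X 2, X 3] :
        Fin 4 → MvPolynomial (Fin 4) ℤ) p)
      = aeval (![X 0 - X 2 - X 3, X 1, X 2, X 3] :
        Fin 4 → MvPolynomial (Fin 4) ℤ) (pderiv 1 p) := by
  induction p using MvPolynomial.induction_on with
  | C a => simp
  | add p q hp hq => simp only [map_add, hp, hq]
  | mul_X p i hp =>
    rw [map_mul, pderiv_mul, pderiv_mul, hp, map_add, map_mul, map_mul]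
    congr 1
    fin_cases i <;> simp [pderiv_X]

lemma pderiv_nat (m : ℕ) : pderiv (1 : Fin 4) (m : MvPolynomial (Fin 4) ℤ) = 0 := by
  have h : ((m : ℕ) : MvPolynomial (Fin 4) ℤ) = C (m : ℤ) := by simp
  rw [h, pderiv_C]

set_option maxHeartbeats 2000000 in
lemma chapoton_aux (k : ℕ) :
    aeval ![X 0 - X 2 - X 3, X 1, X 2, X 3] (ChapotonQ (k + 2)) =
      (X 0 + ((k : MvPolynomial (Fin 4) ℤ) + 1) * X 2) * ChapotonQ (k + 1) +
        (X 1 - X 2) * (((k : MvPolynomial (Fin 4) ℤ) + 1) * ChapotonQ (k + 1) +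
          X 1 * pderiv 1 (ChapotonQ (k + 1))) := by
  have h1 : pderiv (1 : Fin 4) (X 1 : MvPolynomial (Fin 4) ℤ) = 1 := by simp
  have h0 : pderiv (1 : Fin 4) (X 0 : MvPolynomial (Fin 4) ℤ) = 0 :=
    pderiv_X_of_ne (by decide)
  have h2 : pderiv (1 : Fin 4) (X 2 : MvPolynomial (Fin 4) ℤ) = 0 :=
    pderiv_X_of_ne (by decide)
  have h3 : pderiv (1 : Fin 4) (X 3 : MvPolynomial (Fin 4) ℤ) = 0 :=
    pderiv_X_of_ne (by decide)
  induction k with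
  | zero =>
    simp only [ChapotonQ, Nat.cast_zero, map_one, mul_one, pderiv_one, mul_zero,
      add_zero, map_add, map_mul, aeval_X, Matrix.cons_val_zero, Matrix.cons_val_one,
      Matrix.head_cons, Matrix.cons_val_two, Matrix.tail_cons, Matrix.cons_val_three,
      map_zero, zero_add]
    ring
  | succ k ih =>
    rw [show ChapotonQ (k + 1 + 2) = (X 0 + (((k+1 : ℕ) : MvPolynomial (Fin 4) ℤ) + 1) * X 2) *
        ChapotonQ (k + 2) + (X 1 + X 3) * ((((k+1:ℕ) : MvPolynomial (Fin 4) ℤ) + 1) *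
        ChapotonQ (k + 2) + X 1 * pderiv 1 (ChapotonQ (k + 2))) from rfl]
    push_cast
    simp only [map_add, map_mul, map_one, aeval_X, map_natCast,
      Matrix.cons_val_zero, Matrix.cons_val_one, Matrix.head_cons,
      Matrix.cons_val_two, Matrix.tail_cons, Matrix.cons_val_three,
      ← pderiv_aeval_f4, ih]
    rw [show ChapotonQ (k + 2) = (X 0 + ((k : MvPolynomial (Fin 4) ℤ) + 1) * X 2) *
        ChapotonQ (k + 1) + (X 1 + X 3) * (((k : MvPolynomial (Fin 4) ℤ) + 1) *
        ChapotonQ (k + 1) + X 1 * pderiv 1 (ChapotonQ (k + 1))) from rfl]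
    set P := ChapotonQ (k + 1) with hP
    set D := pderiv (1 : Fin 4) P with hD
    set D2 := pderiv (1 : Fin 4) D with hD2
    simp only [pderiv_mul, map_add, map_sub, map_neg, h0, h1, h2, h3, pderiv_nat, pderiv_one,
      neg_zero, zero_add, zero_sub, sub_zero,
      Nat.cast_ofNat, map_natCast, map_one, ← hD, ← hD2]
    ring

/-- Substituting `x - z - t` for `x` in `Q_{n+1}` yields
`[x + n z + (y - z)(n + y ∂_y)] Q_n`. -/
theorem chapotonQ_shift (n : ℕ) (hn : 1 ≤ n) :
    aeval ![X 0 - X 2 - X 3, X 1, X 2, X 3] (ChapotonQ (n + 1)) =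
      (X 0 + (n : MvPolynomial (Fin 4) ℤ) * X 2) * ChapotonQ n +
        (X 1 - X 2) * ((n : MvPolynomial (Fin 4) ℤ) * ChapotonQ n +
          X 1 * pderiv 1 (ChapotonQ n)) := by
  obtain ⟨k, rfl⟩ := Nat.exists_eq_add_of_le hn
  rw [add_comm 1 k]
  push_cast
  exact chapoton_aux k
end
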